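/- For u ≥ 0 and t > 0, the function Ψ_u(t) := 1 - Φ(-√(2t) - u/√(2t)) - e^{-2u} Φ(√(2t) - u/√(2t)) satisfies ∂²Ψ_u(t)/∂u² ≤ 0, i.e., u ↦ Ψ_u(t) is concave, where Φ is the standard normal CDF. -/

import Mathlib

open MeasureTheory Real

/-- The standard normal cumulative distribution function. -/
noncomputable def Phi (x : ℝ) : ℝ := ∫ y in Set.Iic x, Real.exp (-y ^ 2 / 2) / Real.sqrt (2 * Real.pi)

/-- `Psi ε t` is the probability that a pair of left-right coalescing Brownian motions
started at distance `ε` apart has not met by time `t`. -/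
noncomputable def Psi (ε t : ℝ) : ℝ :=
  1 - Phi (-Real.sqrt (2 * t) - ε / Real.sqrt (2 * t))
    - Real.exp (-2 * ε) * Phi (Real.sqrt (2 * t) - ε / Real.sqrt (2 * t))

/-!
With `s = √(2t)`, differentiating `Φ` produces the standard normal density `φ`, and the identity
`e^{-2u} φ(s - u/s) = φ(-s - u/s)` collapses the derivatives to
`∂ᵤΨ = 2 φ(-s - u/s) / s + 2 e^{-2u} Φ(s - u/s)` and
`∂ᵤ²Ψ = -(2 (2s + u/s) φ(-s - u/s) / s² + 4 e^{-2u} Φ(s - u/s))`,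
which is visibly nonpositive when `s > 0` and `u ≥ 0`.
-/

noncomputable def gaussDensity (x : ℝ) : ℝ := exp (-x ^ 2 / 2) / √(2 * π)

lemma continuous_gaussDensity : Continuous gaussDensity := by
  unfold gaussDensity; fun_prop

lemma gaussDensity_nonneg (x : ℝ) : 0 ≤ gaussDensity x := by
  unfold gaussDensity; positivity

lemma integrable_gaussDensity : Integrable gaussDensity := by
  have h := (integrable_exp_neg_mul_sq (by norm_num : (0 : ℝ) < 1 / 2)).div_const √(2 * π)
  convert h using 2 with x
  unfold gaussDensity
  ring_nf

lemma hasDerivAt_gaussDensity (x : ℝ) : HasDerivAt gaussDensity (-x * gaussDensity x) x := by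
  have h := (((hasDerivAt_pow 2 x).neg.div_const 2).exp).div_const √(2 * π)
  refine (show HasDerivAt gaussDensity _ x from h).congr_deriv ?_
  simp only [gaussDensity, Pi.neg_apply]
  ring

lemma exp_mul_gaussDensity {s : ℝ} (hs : s ≠ 0) (u : ℝ) :
    exp (-2 * u) * gaussDensity (s - u / s) = gaussDensity (-s - u / s) := by
  unfold gaussDensity
  rw [← mul_div_assoc, ← exp_add]
  congr 2
  field_simp
  ring

lemma Phi_nonneg (x : ℝ) : 0 ≤ Phi x :=
  setIntegral_nonneg measurableSet_Iic fun y _ => by positivity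

lemma hasDerivAt_Phi (x : ℝ) : HasDerivAt Phi (gaussDensity x) x := by
  have hPhi : ∀ y, Phi y = Phi 0 + ∫ z in (0 : ℝ)..y, gaussDensity z := fun y => by
    rw [← intervalIntegral.integral_Iic_sub_Iic integrable_gaussDensity.integrableOn
      integrable_gaussDensity.integrableOn]
    unfold Phi gaussDensity
    ring
  rw [funext hPhi]
  exact (intervalIntegral.integral_hasDerivAt_right
    integrable_gaussDensity.intervalIntegrable
    (continuous_gaussDensity.stronglyMeasurableAtFilter _ _)
    continuous_gaussDensity.continuousAt).const_add _

lemma hasDerivAt_comp_sub_div {f f' : ℝ → ℝ} (hf : ∀ x, HasDerivAt f (f' x) x)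
    (c s u : ℝ) :
    HasDerivAt (fun v => f (c - v / s)) (-f' (c - u / s) / s) u := by
  have hlin : HasDerivAt (fun v => c - v / s) (-(1 / s)) u := by
    simpa using ((hasDerivAt_id u).div_const s).const_sub c
  exact ((hf _).comp u hlin).congr_deriv (by ring)

lemma hasDerivAt_exp_const_mul (c u : ℝ) :
    HasDerivAt (fun v => exp (c * v)) (c * exp (c * u)) u := by
  simpa [mul_comm] using ((hasDerivAt_id u).const_mul c).exp

/-- `Ψ` as a function of `s = √(2t)` and `u`. -/
noncomputable def survivalProb (s u : ℝ) : ℝ :=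
  1 - Phi (-s - u / s) - exp (-2 * u) * Phi (s - u / s)

section SurvivalProb

variable {s : ℝ}

lemma hasDerivAt_survivalProb (hs : s ≠ 0) (u : ℝ) :
    HasDerivAt (survivalProb s)
      (2 * gaussDensity (-s - u / s) / s + 2 * exp (-2 * u) * Phi (s - u / s)) u := by
  have hA := hasDerivAt_comp_sub_div hasDerivAt_Phi (-s) s u
  have hB := hasDerivAt_comp_sub_div hasDerivAt_Phi s s u
  refine ((hA.const_sub 1).sub ((hasDerivAt_exp_const_mul (-2) u).mul hB)).congr_deriv ?_
  rw [← exp_mul_gaussDensity hs u]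
  field_simp
  ring

lemma deriv_survivalProb (hs : s ≠ 0) :
    deriv (survivalProb s) =
      fun u => 2 * gaussDensity (-s - u / s) / s + 2 * exp (-2 * u) * Phi (s - u / s) :=
  funext fun u => (hasDerivAt_survivalProb hs u).deriv

lemma hasDerivAt_deriv_survivalProb (hs : s ≠ 0) (u : ℝ) :
    HasDerivAt (deriv (survivalProb s))
      (-(2 * (2 * s + u / s) * gaussDensity (-s - u / s) / s ^ 2
        + 4 * exp (-2 * u) * Phi (s - u / s))) u := by
  have hA := hasDerivAt_comp_sub_div hasDerivAt_gaussDensity (-s) s u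
  have hB := hasDerivAt_comp_sub_div hasDerivAt_Phi s s u
  rw [deriv_survivalProb hs]
  refine (((hA.const_mul 2).div_const s).add
    (((hasDerivAt_exp_const_mul (-2) u).const_mul 2).mul hB)).congr_deriv ?_
  rw [← exp_mul_gaussDensity hs u]
  field_simp
  ring

lemma deriv2_survivalProb_nonpos (hs : 0 < s) {u : ℝ} (hu : 0 ≤ u) :
    deriv^[2] (survivalProb s) u ≤ 0 := by
  rw [Function.iterate_succ_apply', Function.iterate_one,
    (hasDerivAt_deriv_survivalProb hs.ne' u).deriv, neg_nonpos]
  have := gaussDensity_nonneg (-s - u / s)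
  have := Phi_nonneg (s - u / s)
  positivity

end SurvivalProb

/-- For `t > 0`, `∂²Ψ_u(t)/∂u² ≤ 0` for `u ≥ 0`, i.e., `u ↦ Ψ_u(t)` is concave on `[0, ∞)`. -/
theorem Psi_concave_in_u : ∀ t : ℝ, 0 < t →
    (∀ u : ℝ, 0 ≤ u → deriv (deriv (fun v : ℝ => Psi v t)) u ≤ 0) ∧
    ConcaveOn ℝ (Set.Ici 0) (fun u : ℝ => Psi u t) := by
  intro t ht
  have hs : 0 < √(2 * t) := sqrt_pos.2 (by positivity)
  have hΨ : (fun u => Psi u t) = survivalProb √(2 * t) := rfl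
  rw [hΨ]
  refine ⟨fun u hu => deriv2_survivalProb_nonpos hs hu, ?_⟩
  refine concaveOn_of_deriv2_nonpos' (convex_Ici 0)
    (fun u _ => (hasDerivAt_survivalProb hs.ne' u).differentiableAt.differentiableWithinAt)
    (fun u _ => (hasDerivAt_deriv_survivalProb hs.ne' u).differentiableAt.differentiableWithinAt)
    fun u hu => deriv2_survivalProb_nonpos hs hu
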